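/- arXiv:2507.05054 — 5 statements merged into one kernel-verified Lean document; each statement's English description precedes it below -/
import Mathlib

section
/- The von Neumann entropy of the thermal state, β ↦ S(ρ_β), is strictly decreasing in β on (0,∞) whenever H is not proportional to the identity; consequently, for any value s strictly between the minimum entropy value ln(multiplicity of ground state) and ln(dim H), there is a unique β with S(ρ_β) = s (existence and uniqueness of the observational temperature). -/
open Real

/-- Partition function of a Hamiltonian with eigenvalues `E`. -/
noncomputable def Zfun {n : ℕ} (E : Fin n → ℝ) (β : ℝ) : ℝ :=
  ∑ i, Real.exp (-β * E i)

/-- Gibbs-state eigenvalue (probability of level `i`). -/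
noncomputable def gibbsProb {n : ℕ} (E : Fin n → ℝ) (β : ℝ) (i : Fin n) : ℝ :=
  Real.exp (-β * E i) / Zfun E β

/-- Von Neumann entropy of the thermal state `ρ_β`, through its spectrum. -/
noncomputable def gibbsEntropy {n : ℕ} (E : Fin n → ℝ) (β : ℝ) : ℝ :=
  -∑ i, gibbsProb E β i * Real.log (gibbsProb E β i)

/-- Degeneracy (multiplicity) of the ground state of `E`. -/
noncomputable def groundMult {n : ℕ} (E : Fin n → ℝ) : ℕ :=
  {i | ∀ j, E i ≤ E j}.toFinite.toFinset.card

/-!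
With `Z` the partition function and `U = ⟨E⟩` the mean energy, `S(β) = log Z + β U`; since
`Z' = -Z U` and `U' = -Var_β(E)`, this gives `S'(β) = -β Var_β(E)`, and Lagrange's identity
`2 (⟨E²⟩ - ⟨E⟩²) = ∑ᵢⱼ pᵢ pⱼ (Eᵢ - Eⱼ)²` makes the variance positive when `E` is non-constant.
`S` is continuous with `S(0) = log n`. Shifting `E` so that the ground energy is `0` does not
change `ρ_β`, and then `Z` tends to the ground-state multiplicity while `β Z U → 0` as `β → ∞`.
The intermediate value theorem on `(0, ∞)` and strict monotonicity finish the proof.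
-/

open Filter Topology Finset

theorem Finset.two_mul_sum_sq_mul_sum_sub_sq {ι R : Type*} [CommRing R] (s : Finset ι)
    (w x : ι → R) :
    2 * ((∑ i ∈ s, x i ^ 2 * w i) * ∑ i ∈ s, w i - (∑ i ∈ s, x i * w i) ^ 2) =
      ∑ i ∈ s, ∑ j ∈ s, (x i - x j) ^ 2 * (w i * w j) := by
  have expand : ∀ i j, (x i - x j) ^ 2 * (w i * w j) =
      x i ^ 2 * w i * w j + x j ^ 2 * w j * w i - 2 * (x i * w i) * (x j * w j) := by
    intro i j; ring
  simp only [expand, sum_sub_distrib, sum_add_distrib, ← mul_sum, ← sum_mul]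
  ring

theorem Finset.sum_sq_mul_sum_sub_sq_pos {ι : Type*} (s : Finset ι) {w x : ι → ℝ}
    (hw : ∀ i ∈ s, 0 < w i) {i₀ j₀ : ι} (hi₀ : i₀ ∈ s) (hj₀ : j₀ ∈ s) (hx : x i₀ ≠ x j₀) :
    0 < (∑ i ∈ s, x i ^ 2 * w i) * ∑ i ∈ s, w i - (∑ i ∈ s, x i * w i) ^ 2 := by
  have hterm : ∀ i ∈ s, ∀ j ∈ s, 0 ≤ (x i - x j) ^ 2 * (w i * w j) := fun i hi j hj => by
    have := hw i hi; have := hw j hj; positivity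
  have hpos : 0 < ∑ i ∈ s, ∑ j ∈ s, (x i - x j) ^ 2 * (w i * w j) := by
    refine sum_pos' (fun i hi => sum_nonneg (hterm i hi)) ⟨i₀, hi₀, ?_⟩
    refine sum_pos' (hterm i₀ hi₀) ⟨j₀, hj₀, ?_⟩
    have := sub_ne_zero.2 hx; have := hw i₀ hi₀; have := hw j₀ hj₀
    positivity
  linarith [two_mul_sum_sq_mul_sum_sub_sq s w x]

section Thermodynamics

variable {n : ℕ} (E : Fin n → ℝ)

noncomputable def energyMoment (k : ℕ) (β : ℝ) : ℝ :=
  ∑ i, E i ^ k * exp (-β * E i)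

noncomputable def meanEnergy (β : ℝ) : ℝ :=
  energyMoment E 1 β / Zfun E β

noncomputable def energyVariance (β : ℝ) : ℝ :=
  energyMoment E 2 β / Zfun E β - meanEnergy E β ^ 2

theorem energyMoment_zero : energyMoment E 0 = Zfun E := by
  ext β; simp [energyMoment, Zfun]

theorem Zfun_pos [NeZero n] (β : ℝ) : 0 < Zfun E β :=
  sum_pos (fun _ _ => exp_pos _) univ_nonempty

theorem hasDerivAt_energyMoment (k : ℕ) (β : ℝ) :
    HasDerivAt (energyMoment E k) (-energyMoment E (k + 1) β) β := by
  have hterm : ∀ i ∈ univ, HasDerivAt (fun b => E i ^ k * exp (-b * E i))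
      (-(E i ^ (k + 1) * exp (-β * E i))) β := fun i _ =>
    ((((hasDerivAt_neg β).mul_const (E i)).exp).const_mul (E i ^ k)).congr_deriv (by ring)
  unfold energyMoment
  simpa only [sum_neg_distrib] using HasDerivAt.fun_sum hterm

theorem hasDerivAt_Zfun (β : ℝ) : HasDerivAt (Zfun E) (-energyMoment E 1 β) β := by
  simpa [energyMoment_zero] using hasDerivAt_energyMoment E 0 β

theorem hasDerivAt_meanEnergy [NeZero n] (β : ℝ) :
    HasDerivAt (meanEnergy E) (-energyVariance E β) β := by
  have hZ := (Zfun_pos E β).ne'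
  refine ((hasDerivAt_energyMoment E 1 β).div (hasDerivAt_Zfun E β) hZ).congr_deriv ?_
  simp only [energyVariance, meanEnergy]
  field_simp
  ring

theorem energyVariance_pos [NeZero n] (hE : ∃ i j, E i ≠ E j) (β : ℝ) :
    0 < energyVariance E β := by
  obtain ⟨i, j, hij⟩ := hE
  have hZ := Zfun_pos E β
  have key := sum_sq_mul_sum_sub_sq_pos univ (fun i _ => exp_pos (-β * E i))
    (mem_univ i) (mem_univ j) hij
  have hvar : energyVariance E β =
      (energyMoment E 2 β * Zfun E β - energyMoment E 1 β ^ 2) / Zfun E β ^ 2 := by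
    simp only [energyVariance, meanEnergy]
    field_simp
  rw [hvar]
  simp only [energyMoment, Zfun, pow_one] at key ⊢
  positivity

theorem gibbsEntropy_eq [NeZero n] (β : ℝ) :
    gibbsEntropy E β = log (Zfun E β) + β * meanEnergy E β := by
  have hZ := (Zfun_pos E β).ne'
  have hlog : ∀ i, log (gibbsProb E β i) = -β * E i - log (Zfun E β) := fun i => by
    rw [gibbsProb, log_div (exp_ne_zero _) hZ, log_exp]
  have hsum : ∑ i, exp (-β * E i) * (-β * E i - log (Zfun E β)) =
      -(β * energyMoment E 1 β) - Zfun E β * log (Zfun E β) := by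
    simp only [energyMoment, Zfun, mul_sub, sum_sub_distrib, mul_sum, ← sum_mul]
    ring_nf
    simp only [sum_neg_distrib]
    ring
  simp only [gibbsEntropy, hlog]
  simp only [gibbsProb, div_mul_eq_mul_div, ← sum_div, hsum, meanEnergy]
  field_simp
  ring

theorem hasDerivAt_gibbsEntropy [NeZero n] (β : ℝ) :
    HasDerivAt (gibbsEntropy E) (-β * energyVariance E β) β := by
  have hS : gibbsEntropy E = fun b => log (Zfun E b) + b * meanEnergy E b :=
    funext (gibbsEntropy_eq E)
  have hlogZ := (hasDerivAt_Zfun E β).log (Zfun_pos E β).ne'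
  rw [hS]
  refine (hlogZ.add ((hasDerivAt_id β).mul (hasDerivAt_meanEnergy E β))).congr_deriv ?_
  simp only [meanEnergy, id]
  ring

theorem continuous_gibbsEntropy [NeZero n] : Continuous (gibbsEntropy E) :=
  continuous_iff_continuousAt.2 fun β => (hasDerivAt_gibbsEntropy E β).continuousAt

theorem strictAntiOn_gibbsEntropy [NeZero n] (hE : ∃ i j, E i ≠ E j) :
    StrictAntiOn (gibbsEntropy E) (Set.Ioi 0) := by
  refine strictAntiOn_of_deriv_neg (convex_Ioi 0) (continuous_gibbsEntropy E).continuousOn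
    fun β hβ => ?_
  rw [interior_Ioi] at hβ
  rw [(hasDerivAt_gibbsEntropy E β).deriv, neg_mul]
  exact neg_neg_of_pos (mul_pos hβ (energyVariance_pos E hE β))

theorem gibbsEntropy_zero : gibbsEntropy E 0 = log n := by
  have hp : ∀ i, gibbsProb E 0 i = (n : ℝ)⁻¹ := fun i => by simp [gibbsProb, Zfun]
  rcases eq_or_ne n 0 with rfl | hn
  · simp [gibbsEntropy]
  · simp [gibbsEntropy, hp, hn]

theorem tendsto_exp_neg_mul_atTop {a : ℝ} (ha : 0 < a) :
    Tendsto (fun β => exp (-β * a)) atTop (𝓝 0) :=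
  tendsto_exp_atBot.comp (tendsto_neg_atTop_atBot.atBot_mul_const ha)

theorem tendsto_Zfun_atTop (hE : ∀ i, 0 ≤ E i) :
    Tendsto (Zfun E) atTop (𝓝 #{i | E i = 0}) := by
  rw [natCast_card_filter]
  refine tendsto_finsetSum _ fun i _ => ?_
  rcases (hE i).eq_or_lt with hi | hi
  · simp [← hi]
  · simpa [hi.ne'] using tendsto_exp_neg_mul_atTop hi

theorem tendsto_mul_energyMoment_one_atTop (hE : ∀ i, 0 ≤ E i) :
    Tendsto (fun β => β * energyMoment E 1 β) atTop (𝓝 0) := by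
  simp only [energyMoment, pow_one, mul_sum]
  rw [← sum_const_zero (s := (univ : Finset (Fin n)))]
  refine tendsto_finsetSum _ fun i _ => ?_
  rcases (hE i).eq_or_lt with hi | hi
  · simp [← hi]
  · have h := (tendsto_rpow_mul_exp_neg_mul_atTop_nhds_zero 1 (E i) hi).const_mul (E i)
    simp only [rpow_one, mul_zero] at h
    refine h.congr fun β => ?_
    ring_nf

theorem tendsto_gibbsEntropy_atTop_of_nonneg [NeZero n] (hE : ∀ i, 0 ≤ E i)
    (hE₀ : ∃ i, E i = 0) :
    Tendsto (gibbsEntropy E) atTop (𝓝 (log #{i | E i = 0})) := by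
  obtain ⟨i₀, hi₀⟩ := hE₀
  have hm : (#{i | E i = 0} : ℝ) ≠ 0 := by
    exact_mod_cast (card_pos.2 ⟨i₀, by simp [hi₀]⟩).ne'
  have hZ := tendsto_Zfun_atTop E hE
  have hlim := ((continuousAt_log hm).tendsto.comp hZ).add
    ((tendsto_mul_energyMoment_one_atTop E hE).div hZ hm)
  rw [zero_div, add_zero] at hlim
  refine hlim.congr fun β => ?_
  simp only [gibbsEntropy_eq, meanEnergy, Function.comp_apply, Pi.div_apply, mul_div_assoc]

theorem gibbsProb_sub_const (c : ℝ) : gibbsProb (fun i => E i - c) = gibbsProb E := by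
  ext β i
  have hZ : Zfun (fun i => E i - c) β = exp (β * c) * Zfun E β := by
    simp only [Zfun, mul_sum, ← exp_add]
    exact sum_congr rfl fun i _ => by ring_nf
  rw [gibbsProb, gibbsProb, hZ, show -β * (E i - c) = β * c + -β * E i by ring, exp_add,
    mul_div_mul_left _ _ (exp_ne_zero _)]

theorem gibbsEntropy_sub_const (c : ℝ) :
    gibbsEntropy (fun i => E i - c) = gibbsEntropy E := by
  ext β
  simp only [gibbsEntropy, gibbsProb_sub_const]

theorem groundMult_eq_card_filter : groundMult E = #{i | ∀ j, E i ≤ E j} := by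
  simp [groundMult]

theorem tendsto_gibbsEntropy_atTop [NeZero n] :
    Tendsto (gibbsEntropy E) atTop (𝓝 (log (groundMult E))) := by
  obtain ⟨i₀, -, hi₀⟩ := exists_min_image univ E univ_nonempty
  have hground : ∀ i, E i - E i₀ = 0 ↔ ∀ j, E i ≤ E j := fun i =>
    ⟨fun h j => by linarith [hi₀ j (mem_univ j)], fun h => by linarith [h i₀, hi₀ i (mem_univ i)]⟩
  rw [← gibbsEntropy_sub_const E (E i₀), groundMult_eq_card_filter]
  simp_rw [← hground]
  exact tendsto_gibbsEntropy_atTop_of_nonneg _ (fun i => sub_nonneg.2 (hi₀ i (mem_univ i)))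
    ⟨i₀, sub_self _⟩

end Thermodynamics

theorem observational_temperature_exists_unique_general {n : ℕ}
    (E : Fin n → ℝ) (hE : ∃ i j, E i ≠ E j) :
    StrictAntiOn (gibbsEntropy E) (Set.Ioi 0) ∧
    ∀ s : ℝ, Real.log (groundMult E) < s → s < Real.log n →
      ∃! β : ℝ, β ∈ Set.Ioi (0:ℝ) ∧ gibbsEntropy E β = s := by
  have : NeZero n := ⟨hE.choose.pos.ne'⟩
  have hanti := strictAntiOn_gibbsEntropy E hE
  refine ⟨hanti, fun s hs₁ hs₂ => ?_⟩
  have hzero : Tendsto (gibbsEntropy E) (𝓝[>] 0) (𝓝 (log n)) :=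
    gibbsEntropy_zero E ▸ (continuous_gibbsEntropy E).continuousWithinAt.tendsto
  obtain ⟨β, hβ, hβs⟩ := isPreconnected_Ioi.intermediate_value_Ioo
    (le_principal_iff.2 (Ioi_mem_atTop 0)) (le_principal_iff.2 self_mem_nhdsWithin)
    (continuous_gibbsEntropy E).continuousOn (tendsto_gibbsEntropy_atTop E) hzero ⟨hs₁, hs₂⟩
  exact ⟨β, ⟨hβ, hβs⟩, fun γ ⟨hγ, hγs⟩ => hanti.injOn hγ hβ (hγs.trans hβs.symm)⟩

/-- if `H` is not proportional to the identity (i.e. the spectrum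
`E` is non-constant), then `β ↦ S(ρ_β)` is strictly decreasing on `(0,∞)`, and
for every `s` strictly between `ln(ground-state multiplicity)` and `ln(dim H)`
there is a unique `β ∈ (0,∞)` with `S(ρ_β) = s` (existence and uniqueness of
the observational temperature). -/
theorem observational_temperature_exists_unique {n : ℕ} (hn : 0 < n)
    (E : Fin n → ℝ) (hE : ∃ i j, E i ≠ E j) :
    StrictAntiOn (gibbsEntropy E) (Set.Ioi 0) ∧
    ∀ s : ℝ, Real.log (groundMult E) < s → s < Real.log n →
      ∃! β : ℝ, β ∈ Set.Ioi (0:ℝ) ∧ gibbsEntropy E β = s :=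
  observational_temperature_exists_unique_general E hE
end

section
/- Observational entropy S_C(ρ) = −∑_i p_i ln p_i + ∑_i p_i ln V_i, where p_i = tr(P_i ρ) and V_i = tr(P_i) for a complete family of orthogonal projectors {P_i}, satisfies S_C(ρ) ≤ ln(dim H) for every density matrix ρ, with equality iff p_i = V_i/dim H for all i. -/
open Real Matrix
open scoped ComplexOrder

variable {d : ℕ} {ι : Type*} [Fintype ι] [DecidableEq ι]

private lemma trace_re_nonneg_of_posSemidef {n : ℕ} {M : Matrix (Fin n) (Fin n) ℂ}
    (hM : M.PosSemidef) : 0 ≤ M.trace.re := by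
  have h : ∀ i, 0 ≤ (M i i).re := fun i => by
    have := hM.re_dotProduct_nonneg (Pi.single i 1)
    simpa [Matrix.mulVec_single, dotProduct, Pi.single_apply, apply_ite] using this
  simp only [Matrix.trace, Matrix.diag, Complex.re_sum]
  exact Finset.sum_nonneg fun i _ => h i

private lemma trace_re_mul_conjTranspose_pos {n : ℕ} (A : Matrix (Fin n) (Fin n) ℂ)
    (hA : A ≠ 0) : 0 < (A * Aᴴ).trace.re := by
  have h : (A * Aᴴ).trace.re = ∑ i, ∑ j, Complex.normSq (A i j) := by
    simp only [Matrix.trace, Matrix.diag, Matrix.mul_apply, Matrix.conjTranspose_apply,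
      Complex.re_sum]
    congr 1; ext i; congr 1; ext j
    rw [show star (A i j) = (starRingEnd ℂ) (A i j) from rfl, Complex.mul_conj]
    simp
  rw [h]
  obtain ⟨i, j, hij⟩ : ∃ i j, A i j ≠ 0 := by
    by_contra hc; push_neg at hc; exact hA (by ext i j; simp [hc])
  refine Finset.sum_pos' (fun i _ => Finset.sum_nonneg fun j _ => Complex.normSq_nonneg _)
    ⟨i, Finset.mem_univ i, Finset.sum_pos' (fun j _ => Complex.normSq_nonneg _)
      ⟨j, Finset.mem_univ j, Complex.normSq_pos.2 hij⟩⟩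

/-- Macrostate probability `p_i = tr(P_i ρ)`. -/
noncomputable def obsProb (P : ι → Matrix (Fin d) (Fin d) ℂ)
    (ρ : Matrix (Fin d) (Fin d) ℂ) (i : ι) : ℝ := ((P i * ρ).trace).re

/-- Macrostate volume `V_i = tr(P_i)`. -/
noncomputable def obsVol (P : ι → Matrix (Fin d) (Fin d) ℂ) (i : ι) : ℝ :=
  ((P i).trace).re

/-- Observational entropy `S_C(ρ) = −∑_i p_i ln p_i + ∑_i p_i ln V_i`. -/
noncomputable def obsEntropy (P : ι → Matrix (Fin d) (Fin d) ℂ)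
    (ρ : Matrix (Fin d) (Fin d) ℂ) : ℝ :=
  ∑ i, (Real.negMulLog (obsProb P ρ i) + obsProb P ρ i * Real.log (obsVol P i))

/-- observational entropy is at most `ln(dim H)`, with equality
iff `p_i = V_i / dim H` for all `i`. -/
theorem obsEntropy_le_log_dim (hd : 0 < d)
    (P : ι → Matrix (Fin d) (Fin d) ℂ)
    (hherm : ∀ i, (P i).IsHermitian) (hidem : ∀ i, P i * P i = P i)
    (hnz : ∀ i, P i ≠ 0) (horth : ∀ i j, i ≠ j → P i * P j = 0)
    (hsum : ∑ i, P i = 1)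
    (ρ : Matrix (Fin d) (Fin d) ℂ) (hρ : ρ.PosSemidef) (htr : ρ.trace = 1) :
    obsEntropy P ρ ≤ Real.log d ∧
    (obsEntropy P ρ = Real.log d ↔ ∀ i, obsProb P ρ i = obsVol P i / d) := by
  set q : ι → ℝ := obsProb P ρ with hq_def
  set V : ι → ℝ := obsVol P with hV_def
  have hd' : (0 : ℝ) < d := Nat.cast_pos.mpr hd
  -- nonnegativity of q
  have hq0 : ∀ i, 0 ≤ q i := by
    intro i
    have htr_eq : (P i * ρ).trace = (P i * ρ * (P i)ᴴ).trace := by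
      rw [(hherm i).eq]
      rw [Matrix.trace_mul_comm (P i * ρ) (P i), ← Matrix.mul_assoc, hidem i]
    have : q i = (P i * ρ * (P i)ᴴ).trace.re := by
      rw [hq_def]; unfold obsProb; rw [htr_eq]
    rw [this]
    exact trace_re_nonneg_of_posSemidef (hρ.mul_mul_conjTranspose_same (P i))
  -- sum of q is 1
  have hsumq : ∑ i, q i = 1 := by
    have : ∑ i, (P i * ρ).trace = 1 := by
      rw [← Matrix.trace_sum, ← Finset.sum_mul, hsum, one_mul, htr]
    have h2 : (∑ i, (P i * ρ).trace).re = 1 := by rw [this]; simp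
    rw [Complex.re_sum] at h2
    exact h2
  -- positivity of V
  have hV0 : ∀ i, 0 < V i := by
    intro i
    have : V i = ((P i) * (P i)ᴴ).trace.re := by
      rw [hV_def]; unfold obsVol
      rw [(hherm i).eq, hidem i]
    rw [this]
    exact trace_re_mul_conjTranspose_pos (P i) (hnz i)
  -- sum of V is d
  have hsumV : ∑ i, V i = d := by
    have : ∑ i, (P i).trace = (d : ℂ) := by
      rw [← Matrix.trace_sum, hsum, Matrix.trace_one]
      simp
    have h2 : (∑ i, (P i).trace).re = d := by rw [this]; simp
    rw [Complex.re_sum] at h2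
    exact h2
  -- per-term rewriting
  have key : ∀ i, Real.negMulLog (q i) + q i * Real.log (V i) =
      -(q i * Real.log (q i / V i)) := by
    intro i
    rcases eq_or_ne (q i) 0 with h | h
    · simp [h]
    · rw [Real.log_div h (hV0 i).ne', Real.negMulLog]
      ring
  have hent : obsEntropy P ρ = -∑ i, q i * Real.log (q i / V i) := by
    unfold obsEntropy
    rw [← Finset.sum_neg_distrib]
    exact Finset.sum_congr rfl fun i _ => key i
  set S' : ℝ := ∑ i, q i * Real.log (q i / V i) with hS'
  -- Jensen setup
  set f : ℝ → ℝ := fun x => x * Real.log x with hf_def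
  set w : ι → ℝ := fun i => V i / d with hw_def
  set x : ι → ℝ := fun i => q i / V i with hx_def
  have hw0 : ∀ i ∈ Finset.univ, (0:ℝ) < w i := fun i _ => div_pos (hV0 i) hd'
  have hw1 : ∑ i, w i = 1 := by
    rw [hw_def]; rw [← Finset.sum_div, hsumV, div_self hd'.ne']
  have hmem : ∀ i ∈ Finset.univ, x i ∈ Set.Ici (0:ℝ) := fun i _ =>
    div_nonneg (hq0 i) (hV0 i).le
  have hsum_wx : ∑ i, w i • x i = 1 / d := by
    have : ∀ i, w i • x i = q i / d := by
      intro i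
      rw [smul_eq_mul, hw_def, hx_def]
      field_simp [(hV0 i).ne', hd'.ne']
    rw [Finset.sum_congr rfl fun i _ => this i, ← Finset.sum_div, hsumq]
  have hsum_wfx : ∑ i, w i • f (x i) = S' / d := by
    rw [hS', Finset.sum_div]
    refine Finset.sum_congr rfl fun i _ => ?_
    rw [smul_eq_mul, hw_def, hx_def, hf_def]
    field_simp [(hV0 i).ne', hd'.ne']
  have hf_val : f (1 / d) = -(Real.log d) / d := by
    rw [hf_def]
    simp only [one_div, Real.log_inv]
    field_simp
  -- inequality
  have hineq : f (∑ i, w i • x i) ≤ ∑ i, w i • f (x i) :=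
    strictConvexOn_mul_log.convexOn.map_sum_le (fun i hi => (hw0 i hi).le) hw1 hmem
  rw [hsum_wx, hsum_wfx, hf_val] at hineq
  have hle : obsEntropy P ρ ≤ Real.log d := by
    rw [hent]
    have h1 := mul_le_mul_of_nonneg_right hineq hd'.le
    rw [div_mul_cancel₀ _ hd'.ne', div_mul_cancel₀ _ hd'.ne'] at h1
    linarith
  refine ⟨hle, ?_⟩
  -- equality case
  have hf2 : 1 / (d:ℝ) * Real.log (1 / d) = -Real.log d / d := by
    rw [one_div, Real.log_inv]
    ring
  have hiff := strictConvexOn_mul_log.map_sum_eq_iff hw0 hw1 hmem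
  rw [hsum_wx, hsum_wfx] at hiff
  rw [hf2] at hiff
  constructor
  · intro heq
    have hS'eq : S' = -Real.log d := by
      rw [hent] at heq; linarith
    have hdiv : -Real.log d / d = S' / d := by rw [hS'eq]
    have hx_all := hiff.mp hdiv
    intro i
    have hxi : x i = 1 / d := hx_all i (Finset.mem_univ i)
    rw [hx_def] at hxi
    simp only at hxi
    rw [div_eq_div_iff (hV0 i).ne' hd'.ne'] at hxi
    rw [eq_div_iff hd'.ne']
    linarith
  · intro hp
    have hx_all : ∀ j ∈ Finset.univ, x j = 1 / d := by
      intro j _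
      rw [hx_def]
      simp only
      rw [hp j, div_div, mul_comm, ← div_div, div_self (hV0 j).ne']
    have h2 := hiff.mpr hx_all
    have hS'eq : S' = -Real.log d := by
      have h1 := congrArg (fun y => y * (d:ℝ)) h2
      simp only [div_mul_cancel₀ _ hd'.ne'] at h1
      linarith
    rw [hent, hS'eq]; ring
end

section
/- Observational entropy is lower-bounded by the von Neumann entropy: for any density matrix ρ and any coarse-graining {P_i} by orthogonal projectors summing to identity, S_C(ρ) ≥ S_vN(ρ) = −tr(ρ ln ρ). -/
open Real Matrix
open scoped ComplexOrder

variable {d : ℕ} {ι : Type*} [Fintype ι] [DecidableEq ι]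

/-- Von Neumann entropy `S_vN(ρ) = −tr(ρ ln ρ)`, computed from the spectrum
of the Hermitian matrix `ρ`. -/
noncomputable def vnEntropy {ρ : Matrix (Fin d) (Fin d) ℂ}
    (hρ : ρ.IsHermitian) : ℝ :=
  ∑ i, Real.negMulLog (hρ.eigenvalues i)

/-!
In the eigenbasis `(v_k)` of `ρ`, put `a_ik = ⟨v_k, P_i v_k⟩ ≥ 0`. Then `∑_i a_ik = 1`,
`∑_k a_ik = V_i` and `p_i = ∑_k a_ik λ_k`, so `S_vN(ρ) = ∑_i ∑_k a_ik η(λ_k)` with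
`η = negMulLog`. Jensen's inequality for the concave `η` with the weights `a_ik / V_i` bounds
the inner sum by `V_i η(p_i / V_i) = η(p_i) + p_i ln V_i`.
-/

namespace Real

theorem negMulLog_eq_mul_negMulLog_div_sub {V : ℝ} (hV : V ≠ 0) (p : ℝ) :
    negMulLog p = V * negMulLog (p / V) - p * log V := by
  have h : p / V * negMulLog V = -(p * log V) := by rw [negMulLog]; field_simp
  rw [← div_mul_cancel₀ p hV, negMulLog_mul, h, div_mul_cancel₀ p hV]
  ring

theorem sum_mul_negMulLog_le {κ : Type*} (s : Finset κ) (a x : κ → ℝ)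
    (ha : ∀ k ∈ s, 0 ≤ a k) (hx : ∀ k ∈ s, 0 ≤ x k) :
    ∑ k ∈ s, a k * negMulLog (x k) ≤
      negMulLog (∑ k ∈ s, a k * x k) + (∑ k ∈ s, a k * x k) * log (∑ k ∈ s, a k) := by
  rcases (Finset.sum_nonneg ha).eq_or_lt with hV | hV
  · have ha0 : ∀ k ∈ s, a k = 0 := (Finset.sum_eq_zero_iff_of_nonneg ha).mp hV.symm
    simp +contextual [ha0]
  · have jensen := concaveOn_negMulLog.le_map_centerMass ha hV hx
    simp only [Finset.centerMass, Function.comp_apply, smul_eq_mul, inv_mul_eq_div] at jensen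
    rw [negMulLog_eq_mul_negMulLog_div_sub hV.ne', sub_add_cancel]
    rwa [div_le_iff₀' hV] at jensen

theorem sum_negMulLog_le_of_sum_eq_one {m n : Type*} [Fintype m] [Fintype n]
    (a : m → n → ℝ) (x : n → ℝ) (ha : ∀ i k, 0 ≤ a i k) (hx : ∀ k, 0 ≤ x k)
    (hcol : ∀ k, ∑ i, a i k = 1) :
    ∑ k, negMulLog (x k) ≤
      ∑ i, (negMulLog (∑ k, a i k * x k) + (∑ k, a i k * x k) * log (∑ k, a i k)) :=
  calc ∑ k, negMulLog (x k) = ∑ i, ∑ k, a i k * negMulLog (x k) := by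
        simp_rw [Finset.sum_comm (γ := m), ← Finset.sum_mul, hcol, one_mul]
    _ ≤ _ := Finset.sum_le_sum fun i _ =>
        sum_mul_negMulLog_le _ _ _ (fun k _ => ha i k) (fun k _ => hx k)

end Real

namespace Matrix

theorem IsHermitian.posSemidef_of_mul_self_eq {n 𝕜 : Type*} [Fintype n] [RCLike 𝕜]
    {A : Matrix n n 𝕜} (hA : A.IsHermitian) (h : A * A = A) : A.PosSemidef := by
  simpa [hA.eq, h] using posSemidef_conjTranspose_mul_self A

theorem trace_conjStarAlgAut {n R : Type*} [Fintype n] [DecidableEq n] [CommRing R] [StarRing R]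
    (u : unitary (Matrix n n R)) (A : Matrix n n R) :
    (Unitary.conjStarAlgAut R _ u A).trace = A.trace := by
  rw [Unitary.conjStarAlgAut_apply, trace_mul_cycle, Unitary.coe_star_mul_self, one_mul]

theorem IsHermitian.trace_mul_eq_sum_mul_eigenvalues {n 𝕜 : Type*} [Fintype n] [DecidableEq n]
    [RCLike 𝕜] {ρ : Matrix n n 𝕜} (hρ : ρ.IsHermitian) (A : Matrix n n 𝕜) :
    (A * ρ).trace = ∑ k,
      Unitary.conjStarAlgAut 𝕜 _ (star hρ.eigenvectorUnitary) A k k * hρ.eigenvalues k := by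
  rw [← trace_conjStarAlgAut (star hρ.eigenvectorUnitary), map_mul,
    hρ.conjStarAlgAut_star_eigenvectorUnitary]
  simp [trace, mul_diagonal]

end Matrix

theorem vnEntropy_le_obsEntropy_general
    (P : ι → Matrix (Fin d) (Fin d) ℂ)
    (hherm : ∀ i, (P i).IsHermitian) (hidem : ∀ i, P i * P i = P i)
    (hsum : ∑ i, P i = 1)
    (ρ : Matrix (Fin d) (Fin d) ℂ) (hρ : ρ.PosSemidef) :
    vnEntropy hρ.1 ≤ obsEntropy P ρ := by
  set u := star hρ.1.eigenvectorUnitary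
  set a : ι → Fin d → ℝ := fun i k => (Unitary.conjStarAlgAut ℂ _ u (P i) k k).re
  have ha : ∀ i k, 0 ≤ a i k := fun i k => by
    have hPu := ((hherm i).posSemidef_of_mul_self_eq (hidem i)).mul_mul_conjTranspose_same
      (u : Matrix (Fin d) (Fin d) ℂ)
    exact (Complex.nonneg_iff.mp hPu.diag_nonneg).1
  have hcol : ∀ k, ∑ i, a i k = 1 := fun k => by
    rw [← Complex.re_sum, ← Matrix.sum_apply, ← map_sum, hsum, map_one, one_apply_eq,
      Complex.one_re]
  have hV : ∀ i, obsVol P i = ∑ k, a i k := fun i => by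
    rw [obsVol, ← trace_conjStarAlgAut u, trace, Complex.re_sum]
    rfl
  have hp : ∀ i, obsProb P ρ i = ∑ k, a i k * hρ.1.eigenvalues k := fun i => by
    rw [obsProb, hρ.1.trace_mul_eq_sum_mul_eigenvalues, Complex.re_sum]
    simp [a, u]
  simpa only [vnEntropy, obsEntropy, hp, hV] using
    Real.sum_negMulLog_le_of_sum_eq_one a _ ha hρ.eigenvalues_nonneg hcol

/-- observational entropy is lower-bounded by the von Neumann
entropy: `S_C(ρ) ≥ S_vN(ρ) = −tr(ρ ln ρ)`. -/
theorem vnEntropy_le_obsEntropy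
    (P : ι → Matrix (Fin d) (Fin d) ℂ)
    (hherm : ∀ i, (P i).IsHermitian) (hidem : ∀ i, P i * P i = P i)
    (hnz : ∀ i, P i ≠ 0) (horth : ∀ i j, i ≠ j → P i * P j = 0)
    (hsum : ∑ i, P i = 1)
    (ρ : Matrix (Fin d) (Fin d) ℂ) (hρ : ρ.PosSemidef) (htr : ρ.trace = 1) :
    vnEntropy hρ.1 ≤ obsEntropy P ρ :=
  vnEntropy_le_obsEntropy_general P hherm hidem hsum ρ hρ
end

section
/- Refinement monotonicity of observational entropy: if coarse-graining C' = {Q_k} refines C = {P_i} (each P_i is a sum of some of the Q_k), then S_{C'}(ρ) ≤ S_C(ρ) for every density matrix ρ. -/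
open Real Matrix
open scoped ComplexOrder

variable {d : ℕ} {ι κ : Type*} [Fintype ι] [DecidableEq ι] [Fintype κ] [DecidableEq κ]

/-!
Refining a coarse-graining splits each cell `Pᵢ` into the cells `Q_k` of its block, and
probabilities `pᵢ = tr(Pᵢρ)` and volumes `Vᵢ = tr Pᵢ` add up over the block. Cell by cell
the claim is then the log-sum inequality `∑ₖ qₖ log (vₖ / qₖ) ≤ q log (v / q)`, which is
Jensen's inequality for the concave function `x ↦ -x log x` with weights `vₖ / v` at the
points `qₖ / vₖ`.
-/

open Finset

theorem mul_negMulLog_div {q v : ℝ} (hv : v ≠ 0) :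
    v * negMulLog (q / v) = negMulLog q + q * log v := by
  rw [div_eq_mul_inv, negMulLog_mul]
  simp only [negMulLog, log_inv]
  field_simp

theorem sum_negMulLog_add_mul_log_le {α : Type*} (s : Finset α) {q v : α → ℝ}
    (hq : ∀ k ∈ s, 0 ≤ q k) (hv : ∀ k ∈ s, 0 < v k) :
    ∑ k ∈ s, (negMulLog (q k) + q k * log (v k)) ≤
      negMulLog (∑ k ∈ s, q k) + (∑ k ∈ s, q k) * log (∑ k ∈ s, v k) := by
  rcases s.eq_empty_or_nonempty with rfl | hs
  · simp
  set V := ∑ k ∈ s, v k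
  have hV : 0 < V := sum_pos hv hs
  have jensen := concaveOn_negMulLog.le_map_sum (t := s) (w := fun k => v k / V)
    (p := fun k => q k / v k) (fun k hk => (div_pos (hv k hk) hV).le)
    (by rw [← sum_div, div_self hV.ne']) (fun k hk => div_nonneg (hq k hk) (hv k hk).le)
  calc ∑ k ∈ s, (negMulLog (q k) + q k * log (v k))
      = V * ∑ k ∈ s, (v k / V) • negMulLog (q k / v k) := by
        rw [mul_sum]
        refine sum_congr rfl fun k hk => ?_
        rw [← mul_negMulLog_div (hv k hk).ne', smul_eq_mul]
        field_simp
    _ ≤ V * negMulLog (∑ k ∈ s, (v k / V) • (q k / v k)) :=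
        mul_le_mul_of_nonneg_left jensen hV.le
    _ = V * negMulLog ((∑ k ∈ s, q k) / V) := by
        rw [sum_div]
        congr 2
        refine sum_congr rfl fun k hk => ?_
        rw [smul_eq_mul]
        field_simp [(hv k hk).ne']
    _ = _ := mul_negMulLog_div hV.ne'

section Projection

variable {n R : Type*} [Fintype n] [CommRing R] [PartialOrder R] [StarRing R] [StarOrderedRing R]

theorem Matrix.trace_mul_nonneg_of_isHermitian_of_idempotent {A ρ : Matrix n n R}
    (hA : A.IsHermitian) (hAA : A * A = A) (hρ : ρ.PosSemidef) : 0 ≤ (A * ρ).trace := by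
  have hconj : (A * ρ).trace = (A * ρ * Aᴴ).trace := by
    rw [hA.eq, trace_mul_cycle, hAA]
  rw [hconj]
  exact (hρ.mul_mul_conjTranspose_same A).trace_nonneg

theorem Matrix.trace_pos_of_isHermitian_of_idempotent [NoZeroDivisors R] {A : Matrix n n R}
    (hA : A.IsHermitian) (hAA : A * A = A) (hA0 : A ≠ 0) : 0 < A.trace := by
  have hgram : A = A * Aᴴ := by rw [hA.eq, hAA]
  rw [hgram]
  exact (posSemidef_self_mul_conjTranspose A).trace_nonneg.lt_of_ne'
    (trace_mul_conjTranspose_self_eq_zero_iff.not.mpr hA0)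

end Projection

section Cells

omit [Fintype ι] [DecidableEq ι] [Fintype κ] [DecidableEq κ]

theorem obsProb_eq_sum_of_eq_sum {P : ι → Matrix (Fin d) (Fin d) ℂ}
    {Q : κ → Matrix (Fin d) (Fin d) ℂ} {i : ι} {s : Finset κ} (h : P i = ∑ k ∈ s, Q k)
    (ρ : Matrix (Fin d) (Fin d) ℂ) : obsProb P ρ i = ∑ k ∈ s, obsProb Q ρ k := by
  rw [obsProb, h, sum_mul, trace_sum, Complex.re_sum]
  rfl

theorem obsVol_eq_sum_of_eq_sum {P : ι → Matrix (Fin d) (Fin d) ℂ}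
    {Q : κ → Matrix (Fin d) (Fin d) ℂ} {i : ι} {s : Finset κ} (h : P i = ∑ k ∈ s, Q k) :
    obsVol P i = ∑ k ∈ s, obsVol Q k := by
  rw [obsVol, h, trace_sum, Complex.re_sum]
  rfl

theorem obsProb_nonneg {P : ι → Matrix (Fin d) (Fin d) ℂ} {ρ : Matrix (Fin d) (Fin d) ℂ}
    {i : ι} (hP : (P i).IsHermitian) (hPP : P i * P i = P i) (hρ : ρ.PosSemidef) :
    0 ≤ obsProb P ρ i :=
  (Complex.nonneg_iff.mp (trace_mul_nonneg_of_isHermitian_of_idempotent hP hPP hρ)).1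

theorem obsVol_pos {P : ι → Matrix (Fin d) (Fin d) ℂ} {i : ι} (hP : (P i).IsHermitian)
    (hPP : P i * P i = P i) (hP0 : P i ≠ 0) : 0 < obsVol P i :=
  (Complex.pos_iff.mp (trace_pos_of_isHermitian_of_idempotent hP hPP hP0)).1

end Cells

theorem obsEntropy_antitone_refinement_general
    (P : ι → Matrix (Fin d) (Fin d) ℂ) (Q : κ → Matrix (Fin d) (Fin d) ℂ)
    (hhermQ : ∀ k, (Q k).IsHermitian) (hidemQ : ∀ k, Q k * Q k = Q k)
    (hnzQ : ∀ k, Q k ≠ 0)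
    (g : κ → ι) (hrefine : ∀ i, P i = ∑ k ∈ Finset.univ.filter (g · = i), Q k)
    (ρ : Matrix (Fin d) (Fin d) ℂ) (hρ : ρ.PosSemidef) :
    obsEntropy Q ρ ≤ obsEntropy P ρ := by
  rw [obsEntropy, ← sum_fiberwise univ g]
  refine sum_le_sum fun i _ => ?_
  rw [obsProb_eq_sum_of_eq_sum (hrefine i), obsVol_eq_sum_of_eq_sum (hrefine i)]
  exact sum_negMulLog_add_mul_log_le _ (fun k _ => obsProb_nonneg (hhermQ k) (hidemQ k) hρ)
    fun k _ => obsVol_pos (hhermQ k) (hidemQ k) (hnzQ k)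

/-- refinement monotonicity of observational entropy.  If the
coarse-graining `{Q_k}` refines `{P_i}` (each `P_i` is the sum of the `Q_k`
in its block, as given by a block-assignment map `g`), then
`S_{C'}(ρ) ≤ S_C(ρ)` for every density matrix `ρ`. -/
theorem obsEntropy_antitone_refinement
    (P : ι → Matrix (Fin d) (Fin d) ℂ) (Q : κ → Matrix (Fin d) (Fin d) ℂ)
    (hhermP : ∀ i, (P i).IsHermitian) (hidemP : ∀ i, P i * P i = P i)
    (hnzP : ∀ i, P i ≠ 0) (horthP : ∀ i j, i ≠ j → P i * P j = 0)
    (hsumP : ∑ i, P i = 1)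
    (hhermQ : ∀ k, (Q k).IsHermitian) (hidemQ : ∀ k, Q k * Q k = Q k)
    (hnzQ : ∀ k, Q k ≠ 0) (horthQ : ∀ k l, k ≠ l → Q k * Q l = 0)
    (hsumQ : ∑ k, Q k = 1)
    (g : κ → ι) (hrefine : ∀ i, P i = ∑ k ∈ Finset.univ.filter (g · = i), Q k)
    (ρ : Matrix (Fin d) (Fin d) ℂ) (hρ : ρ.PosSemidef) (htr : ρ.trace = 1) :
    obsEntropy Q ρ ≤ obsEntropy P ρ :=
  obsEntropy_antitone_refinement_general P Q hhermQ hidemQ hnzQ g hrefine ρ hρ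
end

section
/- Composing the series expansions ΔW = vΔβ(1 + (X/2)Δβ + (Y/6)Δβ²) and Δβ = βδ(1 − ((1+βX)/2)δ + ((3+4βX+3β²X²−β²Y)/6)δ²) yields ΔW = vβδ(1 − δ/2 + ((3+Xβ)/6)δ² + O(δ³)); in particular, the fourth-moment coefficient Y cancels from the second-order term. -/
open Real Asymptotics Filter

/-- composing `ΔW(Δβ) = vΔβ(1 + (X/2)Δβ + (Y/6)Δβ²)` with the
inverse series `Δβ(δ) = βδ(1 − ((1+βX)/2)δ + ((3+4βX+3β²X²−β²Y)/6)δ²)` yields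
`ΔW = vβ(δ − δ²/2 + ((3+Xβ)/6)δ³) + O(δ⁴)`; in particular the fourth-moment
parameter `Y` cancels from the second-order term. -/
theorem work_difference_series (β v X Y : ℝ) (hβ : 0 < β) (hv : 0 < v) :
    let W : ℝ → ℝ := fun b => v * b * (1 + X / 2 * b + Y / 6 * b ^ 2)
    let Δβ : ℝ → ℝ := fun δ =>
      β * δ * (1 - (1 + β * X) / 2 * δ +
        (3 + 4 * β * X + 3 * β ^ 2 * X ^ 2 - β ^ 2 * Y) / 6 * δ ^ 2)
    (fun δ => W (Δβ δ) -
        v * β * (δ - δ ^ 2 / 2 + (3 + X * β) / 6 * δ ^ 3))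
      =O[nhds 0] fun δ => δ ^ 4 := by
  intro W Δβ
  let a0 : ℝ := (5/8 : ℝ) * β ^ 2 * X + (-1/4 : ℝ) * β ^ 3 * Y + (11/12 : ℝ) * β ^ 3 * X ^ 2 + (-5/12 : ℝ) * β ^ 4 * X * Y + (5/8 : ℝ) * β ^ 4 * X ^ 3
  let a1 : ℝ := (-1/4 : ℝ) * β ^ 2 * X + (3/8 : ℝ) * β ^ 3 * Y + (-7/12 : ℝ) * β ^ 3 * X ^ 2 + (2/3 : ℝ) * β ^ 4 * X * Y + (-7/12 : ℝ) * β ^ 4 * X ^ 3 + (-1/12 : ℝ) * β ^ 5 * Y ^ 2 + (11/24 : ℝ) * β ^ 5 * X ^ 2 * Y + (-1/4 : ℝ) * β ^ 5 * X ^ 4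
  let a2 : ℝ := (1/8 : ℝ) * β ^ 2 * X + (-13/48 : ℝ) * β ^ 3 * Y + (1/3 : ℝ) * β ^ 3 * X ^ 2 + (-35/48 : ℝ) * β ^ 4 * X * Y + (17/36 : ℝ) * β ^ 4 * X ^ 3 + (1/12 : ℝ) * β ^ 5 * Y ^ 2 + (-109/144 : ℝ) * β ^ 5 * X ^ 2 * Y + (1/3 : ℝ) * β ^ 5 * X ^ 4 + (7/72 : ℝ) * β ^ 6 * X * Y ^ 2 + (-17/48 : ℝ) * β ^ 6 * X ^ 3 * Y + (1/8 : ℝ) * β ^ 6 * X ^ 5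
  let a3 : ℝ := (3/16 : ℝ) * β ^ 3 * Y + (13/24 : ℝ) * β ^ 4 * X * Y + (-5/48 : ℝ) * β ^ 5 * Y ^ 2 + (55/72 : ℝ) * β ^ 5 * X ^ 2 * Y + (-11/72 : ℝ) * β ^ 6 * X * Y ^ 2 + (13/24 : ℝ) * β ^ 6 * X ^ 3 * Y + (1/72 : ℝ) * β ^ 7 * Y ^ 3 + (-5/48 : ℝ) * β ^ 7 * X ^ 2 * Y ^ 2 + (3/16 : ℝ) * β ^ 7 * X ^ 4 * Y
  let a4 : ℝ := (-1/16 : ℝ) * β ^ 3 * Y + (-11/48 : ℝ) * β ^ 4 * X * Y + (1/24 : ℝ) * β ^ 5 * Y ^ 2 + (-29/72 : ℝ) * β ^ 5 * X ^ 2 * Y + (7/72 : ℝ) * β ^ 6 * X * Y ^ 2 + (-29/72 : ℝ) * β ^ 6 * X ^ 3 * Y + (-1/144 : ℝ) * β ^ 7 * Y ^ 3 + (7/72 : ℝ) * β ^ 7 * X ^ 2 * Y ^ 2 + (-11/48 : ℝ) * β ^ 7 * X ^ 4 * Y + (-1/144 : ℝ) * β ^ 8 * X * Y ^ 3 + (1/24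 : ℝ) * β ^ 8 * X ^ 3 * Y ^ 2 + (-1/16 : ℝ) * β ^ 8 * X ^ 5 * Y
  let a5 : ℝ := (1/48 : ℝ) * β ^ 3 * Y + (1/12 : ℝ) * β ^ 4 * X * Y + (-1/48 : ℝ) * β ^ 5 * Y ^ 2 + (25/144 : ℝ) * β ^ 5 * X ^ 2 * Y + (-1/18 : ℝ) * β ^ 6 * X * Y ^ 2 + (35/162 : ℝ) * β ^ 6 * X ^ 3 * Y + (1/144 : ℝ) * β ^ 7 * Y ^ 3 + (-17/216 : ℝ) * β ^ 7 * X ^ 2 * Y ^ 2 + (25/144 : ℝ) * β ^ 7 * X ^ 4 * Y + (1/108 : ℝ) * β ^ 8 * X * Y ^ 3 + (-1/18 : ℝ) * β ^ 8 * X ^ 3 * Y ^ 2 + (1/12 : ℝ) * β ^ 8 * X ^ 5 * Y + (-1/1296 : ℝ) * β ^ 9 * Y ^ 4 + (1/144 : ℝ) * β ^ 9 * X ^ 2 * Y ^ 3 + (-1/48 : ℝ) * β ^ 9 * X ^ 4 * Y ^ 2 + (1/48 : ℝ) * β ^ 9 * X ^ 6 * Y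
  set g : ℝ → ℝ := fun δ =>
      a0 + a1 * δ + a2 * δ ^ 2 + a3 * δ ^ 3 + a4 * δ ^ 4 + a5 * δ ^ 5 with hgdef
  have key : ∀ δ : ℝ, W (Δβ δ) -
      v * β * (δ - δ ^ 2 / 2 + (3 + X * β) / 6 * δ ^ 3) = δ ^ 4 * (v * g δ) := by
    intro δ
    simp only [W, Δβ, hgdef, a0, a1, a2, a3, a4, a5]
    ring
  have hgc : Continuous fun δ : ℝ => v * g δ := by
    rw [hgdef]; fun_prop
  have hbd : (fun δ : ℝ => v * g δ) =O[nhds 0] (fun _ => (1 : ℝ)) :=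
    (hgc.tendsto 0).isBigO_one ℝ
  have h2 := (Asymptotics.isBigO_refl (fun δ : ℝ => δ ^ 4) (nhds 0)).mul hbd
  simp only [mul_one] at h2
  calc (fun δ => W (Δβ δ) - v * β * (δ - δ ^ 2 / 2 + (3 + X * β) / 6 * δ ^ 3))
      = fun δ => δ ^ 4 * (v * g δ) := funext key
    _ =O[nhds 0] fun δ => δ ^ 4 := h2
end
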